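/- arXiv:1207.6886 — 3 statements merged into one kernel-verified Lean document; each statement's English description precedes it below -/
import Mathlib

section
/- As λ → ∞, H_λ(x,y) converges to exp(-e^{-x} - e^{-y}) (independence), and as λ → 0⁺, H_λ(x,y) converges to exp(-e^{-min(x,y)}) (complete dependence), for all x, y ∈ ℝ. -/
open Real MeasureTheory Filter

noncomputable def stdPhi (t : ℝ) : ℝ := (Real.sqrt (2 * Real.pi))⁻¹ * Real.exp (-t ^ 2 / 2)

noncomputable def stdPhiCDF (x : ℝ) : ℝ := ∫ t in Set.Iic x, stdPhi t

noncomputable def HR (l x y : ℝ) : ℝ :=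
  Real.exp (-(Real.exp (-x) * stdPhiCDF (l + (y - x) / (2 * l)) +
              Real.exp (-y) * stdPhiCDF (l + (x - y) / (2 * l))))

/-!
`stdPhiCDF` is the distribution function of the standard Gaussian measure: it is right-continuous,
tends to `1` at `+∞` and to `0` at `-∞`, and equals `1/2` at `0` by symmetry. As `λ → ∞` both
arguments `λ ± (y - x) / (2λ)` tend to `+∞`. As `λ → 0⁺` the argument with positive numerator
tends to `+∞` and the other to `-∞`, which picks out `exp (-exp (-min x y))`; for `x = y` both
arguments are `λ → 0⁺` and the two halves `1/2` add up to the same limit.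
-/
open ProbabilityTheory Topology

lemma cdf_zero_of_map_neg_eq {μ : Measure ℝ} [IsProbabilityMeasure μ] [NullSingletonClass μ]
    (hμ : μ.map Neg.neg = μ) : cdf μ 0 = 1 / 2 := by
  have hsymm : μ.real (Set.Iic 0) = μ.real (Set.Ioi 0) := calc
    μ.real (Set.Iic 0) = (μ.map Neg.neg).real (Set.Ici 0) := by
      rw [map_measureReal_apply measurable_neg measurableSet_Ici]; simp
    _ = μ.real (Set.Ioi 0) := by rw [hμ, measureReal_congr Ioi_ae_eq_Ici]
  have htotal : μ.real (Set.Iic 0) + μ.real (Set.Ioi 0) = 1 := by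
    rw [← measureReal_union (Set.Iic_disjoint_Ioi le_rfl) measurableSet_Ioi, Set.Iic_union_Ioi,
      probReal_univ]
  rw [cdf_eq_real]
  linarith

lemma cdf_gaussianReal_zero_zero {v : NNReal} (hv : v ≠ 0) : cdf (gaussianReal 0 v) 0 = 1 / 2 :=
  have := nullSingletonClass_gaussianReal (μ := 0) hv
  cdf_zero_of_map_neg_eq (by simpa using gaussianReal_map_neg (μ := 0) (v := v))

lemma stdPhiCDF_eq_cdf_gaussianReal : stdPhiCDF = cdf (gaussianReal 0 1) := by
  ext x
  have hpdf : stdPhi = gaussianPDFReal 0 1 := by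
    ext t; simp [stdPhi, gaussianPDFReal]
  rw [cdf_eq_real, measureReal_def, gaussianReal_apply_eq_integral _ one_ne_zero,
    ENNReal.toReal_ofReal (setIntegral_nonneg measurableSet_Iic fun t _ ↦
      gaussianPDFReal_nonneg _ _ t), stdPhiCDF, hpdf]

lemma tendsto_stdPhiCDF_atTop : Tendsto stdPhiCDF atTop (𝓝 1) :=
  stdPhiCDF_eq_cdf_gaussianReal ▸ tendsto_cdf_atTop _

lemma tendsto_stdPhiCDF_atBot : Tendsto stdPhiCDF atBot (𝓝 0) :=
  stdPhiCDF_eq_cdf_gaussianReal ▸ tendsto_cdf_atBot _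

lemma tendsto_stdPhiCDF_nhdsGT_zero : Tendsto stdPhiCDF (𝓝[>] 0) (𝓝 (1 / 2)) := by
  rw [stdPhiCDF_eq_cdf_gaussianReal, ← cdf_gaussianReal_zero_zero one_ne_zero]
  exact ((cdf _).right_continuous 0).mono_left (nhdsWithin_mono _ Set.Ioi_subset_Ici_self)

lemma tendsto_add_div_two_mul_atTop (c : ℝ) :
    Tendsto (fun l : ℝ ↦ l + c / (2 * l)) atTop atTop := by
  have hc : Tendsto (fun l : ℝ ↦ c / 2 * l⁻¹) atTop (𝓝 0) := by
    simpa using tendsto_inv_atTop_zero.const_mul (c / 2)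
  exact (hc.add_atTop tendsto_id).congr fun l ↦ by simp only [id]; ring

lemma tendsto_add_div_two_mul_nhdsGT_zero_atTop {c : ℝ} (hc : 0 < c) :
    Tendsto (fun l : ℝ ↦ l + c / (2 * l)) (𝓝[>] 0) atTop := by
  refine (tendsto_nhdsWithin_of_tendsto_nhds tendsto_id).add_atTop
    ((tendsto_inv_nhdsGT_zero.const_mul_atTop (half_pos hc)).congr fun l ↦ ?_)
  ring

lemma tendsto_add_div_two_mul_nhdsGT_zero_atBot {c : ℝ} (hc : c < 0) :
    Tendsto (fun l : ℝ ↦ l + c / (2 * l)) (𝓝[>] 0) atBot := by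
  refine (tendsto_nhdsWithin_of_tendsto_nhds tendsto_id).add_atBot
    ((tendsto_inv_nhdsGT_zero.const_mul_atTop_of_neg (div_neg_of_neg_of_pos hc two_pos)).congr
      fun l ↦ ?_)
  ring

lemma tendsto_HR {f : Filter ℝ} {x y p q : ℝ}
    (hp : Tendsto (fun l ↦ stdPhiCDF (l + (y - x) / (2 * l))) f (𝓝 p))
    (hq : Tendsto (fun l ↦ stdPhiCDF (l + (x - y) / (2 * l))) f (𝓝 q)) :
    Tendsto (fun l ↦ HR l x y) f (𝓝 (exp (-(exp (-x) * p + exp (-y) * q)))) :=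
  ((hp.const_mul _).add (hq.const_mul _)).neg.rexp

/-- As λ → ∞ the Hüsler-Reiss distribution tends to independence; as λ → 0⁺ to
complete dependence. -/
theorem HR_limits (x y : ℝ) :
    Tendsto (fun l => HR l x y) atTop
      (nhds (Real.exp (-Real.exp (-x) - Real.exp (-y)))) ∧
    Tendsto (fun l => HR l x y) (nhdsWithin 0 (Set.Ioi 0))
      (nhds (Real.exp (-Real.exp (-(min x y))))) := by
  constructor
  · convert tendsto_HR (tendsto_stdPhiCDF_atTop.comp (tendsto_add_div_two_mul_atTop _))
      (tendsto_stdPhiCDF_atTop.comp (tendsto_add_div_two_mul_atTop _)) using 3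
    ring
  · rcases lt_trichotomy x y with hxy | rfl | hxy
    · rw [min_eq_left hxy.le]
      convert tendsto_HR
        (tendsto_stdPhiCDF_atTop.comp (tendsto_add_div_two_mul_nhdsGT_zero_atTop (sub_pos.2 hxy)))
        (tendsto_stdPhiCDF_atBot.comp (tendsto_add_div_two_mul_nhdsGT_zero_atBot (sub_neg.2 hxy)))
        using 3
      ring
    · have h : Tendsto (fun l ↦ stdPhiCDF (l + (x - x) / (2 * l))) (𝓝[>] 0) (𝓝 (1 / 2)) := by
        simpa using tendsto_stdPhiCDF_nhdsGT_zero
      convert tendsto_HR h h using 3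
      rw [min_self]; ring
    · rw [min_eq_right hxy.le]
      convert tendsto_HR
        (tendsto_stdPhiCDF_atBot.comp (tendsto_add_div_two_mul_nhdsGT_zero_atBot (sub_neg.2 hxy)))
        (tendsto_stdPhiCDF_atTop.comp (tendsto_add_div_two_mul_nhdsGT_zero_atTop (sub_pos.2 hxy)))
        using 3
      ring
end

section
/- Let μ be the measure on ℝ² with density (e^{-x}/(2λ)) φ(λ + (y-x)/(2λ)) dx dy, λ > 0. Then for any t < 0, μ({(x,y) : x > 0, y - x ≤ t}) = Φ(λ + t/(2λ)). -/
open Real MeasureTheory Set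
open scoped ENNReal

lemma stdPhi_nonneg (t : ℝ) : 0 ≤ stdPhi t := by
  unfold stdPhi; positivity

lemma integrable_stdPhi : Integrable stdPhi := by
  have : Integrable (fun t : ℝ => Real.exp (-(1/2) * t ^ 2)) := integrable_exp_neg_mul_sq (by norm_num)
  have h : stdPhi = fun t => (Real.sqrt (2 * Real.pi))⁻¹ * Real.exp (-(1/2) * t ^ 2) := by
    funext t; unfold stdPhi; ring_nf
  rw [h]
  exact this.const_mul _

/-- affine substitution in an `Iic` integral -/
lemma integral_comp_affine_Iic (g : ℝ → ℝ) {a : ℝ} (ha : 0 < a) (b d : ℝ) :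
    ∫ y in Iic (a * d + b), g ((y - b) / a) = a * ∫ u in Iic d, g u := by
  have key : ∀ y : ℝ, (Iic (a * d + b)).indicator (fun y => g ((y - b) / a)) y
      = (Iic d).indicator g ((y - b) / a) := by
    intro y
    have hiff : (y - b) / a ≤ d ↔ y ≤ a * d + b := by
      rw [div_le_iff₀ ha]
      constructor <;> intro h <;> nlinarith
    by_cases hy : y ≤ a * d + b
    · rw [Set.indicator_of_mem (Set.mem_Iic.mpr hy), Set.indicator_of_mem (Set.mem_Iic.mpr (hiff.mpr hy))]
    · rw [Set.indicator_of_notMem (fun h => hy (Set.mem_Iic.mp h)), Set.indicator_of_notMem (fun h => hy (hiff.mp (Set.mem_Iic.mp h)))]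
  rw [← integral_indicator measurableSet_Iic, ← integral_indicator measurableSet_Iic]
  simp_rw [key]
  have h1 : ∀ y : ℝ, (y - b) / a = a⁻¹ * (y - b) := by intro y; rw [inv_mul_eq_div]
  simp_rw [h1]
  rw [integral_sub_right_eq_self (fun y => (Iic d).indicator g (a⁻¹ * y)) b]
  rw [MeasureTheory.Measure.integral_comp_mul_left (fun y => (Iic d).indicator g y) a⁻¹]
  rw [inv_inv, abs_of_pos ha, smul_eq_mul]

/-- Exponent measure of the bivariate Hüsler-Reiss distribution, with density
`e^{-x}/(2λ) φ(λ + (y-x)/(2λ))` with respect to Lebesgue measure on ℝ². -/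
noncomputable def HRexpMeasure (l : ℝ) : Measure (ℝ × ℝ) :=
  (volume : Measure (ℝ × ℝ)).withDensity
    (fun p => ENNReal.ofReal (Real.exp (-p.1) / (2 * l) * stdPhi (l + (p.2 - p.1) / (2 * l))))


lemma stdPhiCDF_nonneg (x : ℝ) : 0 ≤ stdPhiCDF x :=
  setIntegral_nonneg measurableSet_Iic (fun t _ => stdPhi_nonneg t)

lemma continuous_stdPhi : Continuous stdPhi := by
  unfold stdPhi; continuity

lemma integrable_stdPhi_affine (l x : ℝ) (hl : 0 < l) :
    Integrable (fun y : ℝ => stdPhi (l + (y - x) / (2 * l))) := by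
  have h2l : (2 : ℝ) * l ≠ 0 := by positivity
  have g1 : Integrable (fun u : ℝ => stdPhi (u + l)) := integrable_stdPhi.comp_add_right l
  have g2 : Integrable (fun u : ℝ => stdPhi (u / (2 * l) + l)) := g1.comp_div h2l
  have g3 : Integrable (fun y : ℝ => stdPhi ((y - x) / (2 * l) + l)) := g2.comp_sub_right x
  simpa [add_comm] using g3

/-- Exponent measure of the event that the first coordinate exceeds 0 and the
increment is at most `t < 0`. -/
theorem HRexpMeasure_increment_neg (l : ℝ) (hl : 0 < l) (t : ℝ) (ht : t < 0) :
    HRexpMeasure l {p : ℝ × ℝ | 0 < p.1 ∧ p.2 - p.1 ≤ t} =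
      ENNReal.ofReal (stdPhiCDF (l + t / (2 * l))) := by
  set C := stdPhiCDF (l + t / (2 * l)) with hC
  have hCpos : 0 ≤ C := stdPhiCDF_nonneg _
  have h2l : (0 : ℝ) < 2 * l := by positivity
  set F : ℝ × ℝ → ℝ≥0∞ :=
    fun p => ENNReal.ofReal (Real.exp (-p.1) / (2 * l) * stdPhi (l + (p.2 - p.1) / (2 * l)))
    with hF
  have hFm : Measurable F := by
    apply Measurable.ennreal_ofReal
    apply Continuous.measurable
    exact ((Real.continuous_exp.comp continuous_fst.neg).div_const _).mul
      (continuous_stdPhi.comp (by continuity))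
  have hS : MeasurableSet {p : ℝ × ℝ | 0 < p.1 ∧ p.2 - p.1 ≤ t} := by
    apply MeasurableSet.inter
    · exact measurableSet_lt measurable_const measurable_fst
    · exact measurableSet_le (measurable_snd.sub measurable_fst) measurable_const
  rw [HRexpMeasure, withDensity_apply _ hS, ← lintegral_indicator hS _]
  rw [Measure.volume_eq_prod, lintegral_prod _ ((hFm.indicator hS).aemeasurable)]
  have inner : ∀ x : ℝ,
      (∫⁻ y, ({p : ℝ × ℝ | 0 < p.1 ∧ p.2 - p.1 ≤ t}).indicator F (x, y)) =
        (Ioi (0:ℝ)).indicator (fun x => ENNReal.ofReal (Real.exp (-x) * C)) x := by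
    intro x
    by_cases hx : 0 < x
    · have hind : ∀ y : ℝ, ({p : ℝ × ℝ | 0 < p.1 ∧ p.2 - p.1 ≤ t}).indicator F (x, y)
          = (Iic (t + x)).indicator (fun y => F (x, y)) y := by
        intro y
        by_cases hy : y ≤ t + x
        · rw [Set.indicator_of_mem (Set.mem_Iic.mpr hy),
            Set.indicator_of_mem (by exact ⟨hx, by linarith⟩)]
        · rw [Set.indicator_of_notMem (fun h => hy (by
            have := h.2; linarith)), Set.indicator_of_notMem
            (fun h => hy (Set.mem_Iic.mp h))]
      simp_rw [hind]
      rw [lintegral_indicator measurableSet_Iic _,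
        Set.indicator_of_mem (Set.mem_Ioi.mpr hx)]
      have hInt : IntegrableOn
          (fun y => Real.exp (-x) / (2 * l) * stdPhi (l + (y - x) / (2 * l))) (Iic (t + x)) :=
        (((integrable_stdPhi_affine l x hl).const_mul _)).integrableOn
      rw [hF]
      rw [← MeasureTheory.ofReal_integral_eq_lintegral_ofReal hInt
        (Filter.Eventually.of_forall (fun y => mul_nonneg (by positivity) (stdPhi_nonneg _)))]
      congr 1
      rw [MeasureTheory.integral_const_mul]
      have hb : ∀ y : ℝ, l + (y - x) / (2 * l) = (y - (x - 2 * l ^ 2)) / (2 * l) := by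
        intro y; field_simp; ring
      simp_rw [hb]
      have hset : t + x = 2 * l * (l + t / (2 * l)) + (x - 2 * l ^ 2) := by
        field_simp; ring
      rw [hset, integral_comp_affine_Iic stdPhi h2l (x - 2 * l ^ 2) (l + t / (2 * l))]
      rw [show (∫ (u : ℝ) in Iic (l + t / (2 * l)), stdPhi u) = C from rfl]
      field_simp
    · have hind : ∀ y : ℝ, ({p : ℝ × ℝ | 0 < p.1 ∧ p.2 - p.1 ≤ t}).indicator F (x, y) = 0 := by
        intro y
        exact Set.indicator_of_notMem (fun h => hx h.1) F
      simp_rw [hind]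
      rw [Set.indicator_of_notMem (fun h => hx (Set.mem_Ioi.mp h))]
      simp
  simp_rw [inner]
  rw [lintegral_indicator measurableSet_Ioi _]
  have hIntOut : IntegrableOn (fun x => Real.exp (-x) * C) (Ioi (0:ℝ)) := by
    have : IntegrableOn (fun x : ℝ => Real.exp (-x)) (Ioi (0:ℝ)) := by
      simpa using exp_neg_integrableOn_Ioi 0 (zero_lt_one)
    exact this.mul_const C
  rw [← MeasureTheory.ofReal_integral_eq_lintegral_ofReal hIntOut
    (Filter.Eventually.of_forall (fun y => by positivity))]
  rw [MeasureTheory.integral_mul_const, integral_exp_neg_Ioi_zero, one_mul]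
end

section
/- Let μ be the measure on ℝ² with density (e^{-x}/(2λ)) φ(λ + (y-x)/(2λ)) dx dy, λ > 0. Then μ({(x,y) : x > 0, y - x ≤ t}) = Φ(λ + t/(2λ)) for all t ∈ ℝ, so that conditional on x > 0 the increment y - x follows a normal distribution with mean -2λ² and variance 4λ². -/
/-! The shear `(x, y) ↦ (x, y - x)` preserves Lebesgue measure on `ℝ²`, and after it the density
`e^{-x}/(2λ) φ(λ + (y-x)/(2λ))` factors as `e^{-x}` times the `N(-2λ², 4λ²)` density of the
increment `z = y - x`. So the image of `μ` is a product measure, the event becomes the rectangle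
`(0, ∞) × (-∞, t]`, and its measure is `(∫₀^∞ e^{-x} dx) · P(N(-2λ², 4λ²) ≤ t) = Φ(λ + t/(2λ))`. -/

open Real MeasureTheory

open ProbabilityTheory Set

lemma stdPhi_eq_gaussianPDFReal : stdPhi = gaussianPDFReal 0 1 := by
  ext t
  simp [stdPhi, gaussianPDFReal, neg_div]

lemma inv_mul_stdPhi_sub_div {s : ℝ} (hs : 0 < s) (m z : ℝ) :
    s⁻¹ * stdPhi ((z - m) / s) = gaussianPDFReal m (s ^ 2).toNNReal z := by
  rw [gaussianPDFReal, Real.coe_toNNReal _ (by positivity), stdPhi,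
    Real.sqrt_mul (x := 2 * π) (by positivity), Real.sqrt_sq hs.le, mul_inv, div_pow,
    ← mul_assoc, mul_comm s⁻¹]
  congr 2
  field_simp

lemma gaussianReal_Iic_eq_ofReal_stdPhiCDF (m : ℝ) {s : ℝ} (hs : 0 < s) (t : ℝ) :
    gaussianReal m (s ^ 2).toNNReal (Iic t) = ENNReal.ofReal (stdPhiCDF ((t - m) / s)) := by
  have hmap : (gaussianReal 0 1).map (fun u => s * u + m) = gaussianReal m (s ^ 2).toNNReal := by
    rw [show (fun u => s * u + m) = (· + m) ∘ (s * ·) from rfl,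
      ← Measure.map_map (measurable_add_const m) (measurable_const_mul s),
      gaussianReal_map_const_mul, gaussianReal_map_add_const]
    congr 1
    · simp
    · ext; simp [Real.coe_toNNReal _ (sq_nonneg s)]
  have hpre : (fun u => s * u + m) ⁻¹' Iic t = Iic ((t - m) / s) := by
    ext u
    simp only [mem_preimage, mem_Iic, le_div_iff₀ hs]
    constructor <;> intro h <;> linarith
  rw [← hmap, Measure.map_apply (by fun_prop) measurableSet_Iic, hpre,
    gaussianReal_apply_eq_integral _ one_ne_zero, stdPhiCDF, stdPhi_eq_gaussianPDFReal]

lemma setLIntegral_exp_neg_Ioi_zero : ∫⁻ x in Ioi 0, ENNReal.ofReal (exp (-x)) = 1 := by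
  have hint : IntegrableOn (fun x : ℝ => exp (-x)) (Ioi 0) := by
    simpa using exp_neg_integrableOn_Ioi 0 one_pos
  rw [← ENNReal.ofReal_one, ← integral_exp_neg_Ioi_zero,
    ofReal_integral_eq_lintegral_ofReal hint (ae_of_all _ fun x => (exp_pos _).le)]

lemma MeasureTheory.MeasurePreserving.map_withDensity_comp {α β : Type*} [MeasurableSpace α]
    [MeasurableSpace β] {μ : Measure α} {ν : Measure β} {f : α → β}
    (hf : MeasurePreserving f μ ν) {g : β → ENNReal} (hg : Measurable g) :
    (μ.withDensity (g ∘ f)).map f = ν.withDensity g := by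
  ext s hs
  rw [Measure.map_apply hf.measurable hs, withDensity_apply _ (hf.measurable hs),
    withDensity_apply _ hs]
  exact hf.setLIntegral_comp_preimage hs hg

lemma map_HRexpMeasure_increment {l : ℝ} (hl : 0 < l) :
    (HRexpMeasure l).map (fun p => (p.1, p.2 - p.1)) =
      (volume.withDensity fun x => ENNReal.ofReal (exp (-x))).prod
        (gaussianReal (-(2 * l ^ 2)) ((2 * l) ^ 2).toNNReal) := by
  have hv : ((2 * l) ^ 2).toNNReal ≠ 0 := by positivity
  have hdensity : (fun p : ℝ × ℝ =>
      ENNReal.ofReal (exp (-p.1) / (2 * l) * stdPhi (l + (p.2 - p.1) / (2 * l)))) =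
      (fun q : ℝ × ℝ => ENNReal.ofReal (exp (-q.1)) *
        gaussianPDF (-(2 * l ^ 2)) ((2 * l) ^ 2).toNNReal q.2) ∘ (fun p => (p.1, p.2 - p.1)) := by
    ext p
    rw [Function.comp_apply, gaussianPDF, ← inv_mul_stdPhi_sub_div (by positivity),
      ← ENNReal.ofReal_mul (exp_pos _).le, div_eq_mul_inv, mul_assoc]
    congr 4
    field_simp
    ring
  rw [gaussianReal_of_var_ne_zero _ hv,
    prod_withDensity (by fun_prop) (measurable_gaussianPDF _ _), ← Measure.volume_eq_prod,
    HRexpMeasure, hdensity]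
  exact (measurePreserving_prod_sub volume volume).map_withDensity_comp (by fun_prop)

/-- Conditional on the first coordinate being positive, the increment is Gaussian with
mean `-2λ²` and variance `4λ²`: its CDF is `t ↦ Φ(λ + t/(2λ)) = Φ((t-(-2λ²))/√(4λ²))`. -/
theorem HRexpMeasure_increment_gaussian (l : ℝ) (hl : 0 < l) :
    (∀ t : ℝ, HRexpMeasure l {p : ℝ × ℝ | 0 < p.1 ∧ p.2 - p.1 ≤ t} =
      ENNReal.ofReal (stdPhiCDF (l + t / (2 * l)))) ∧
    (∀ t : ℝ, stdPhiCDF (l + t / (2 * l)) =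
      stdPhiCDF ((t - (-(2 * l ^ 2))) / Real.sqrt (4 * l ^ 2))) := by
  have hsd : Real.sqrt (4 * l ^ 2) = 2 * l := by
    rw [show (4 : ℝ) * l ^ 2 = (2 * l) ^ 2 by ring, Real.sqrt_sq (by positivity)]
  have hstd (t : ℝ) : l + t / (2 * l) = (t - (-(2 * l ^ 2))) / (2 * l) := by
    field_simp
    ring
  refine ⟨fun t => ?_, fun t => by rw [hsd, hstd]⟩
  have hS : {p : ℝ × ℝ | 0 < p.1 ∧ p.2 - p.1 ≤ t} =
      (fun p : ℝ × ℝ => (p.1, p.2 - p.1)) ⁻¹' (Ioi 0 ×ˢ Iic t) := rfl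
  rw [hS, ← Measure.map_apply (by fun_prop) (measurableSet_Ioi.prod measurableSet_Iic),
    map_HRexpMeasure_increment hl, Measure.prod_prod, withDensity_apply _ measurableSet_Ioi,
    setLIntegral_exp_neg_Ioi_zero, one_mul,
    gaussianReal_Iic_eq_ofReal_stdPhiCDF _ (by positivity), hstd]
end
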